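/- Let α be an irrational of finite type τ. Then for every ε > 0 there is a constant c = c(α,ε) such that Σ_{h=1}^m 1/(h·‖hα‖) ≤ c·m^{τ−1+ε} for all positive integers m. -/

import Mathlib

/-!
Let `δ = c₀ / N ^ (τ + ε)`. For `h ≤ N` the residues `hα - round (hα)` are pairwise `δ`-separated,
because their differences are residues of `qα` with `1 ≤ q ≤ N`. Hence each band
`bδ ≤ ‖hα‖ < (b + 1)δ` contains at most two of them, one of each sign, and
`∑_{h ≤ N} 1/‖hα‖ ≤ (2/δ) ∑_{b ≤ 1/(2δ)} 1/b ≪ N ^ (τ + 2ε)`. Partial summation against the weights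
`1/h` turns this into the bound `≪ m ^ (τ - 1 + 2ε)`; this loses nothing because Dirichlet's
approximation theorem forces `τ ≥ 1`, so the exponent `τ + 2ε` exceeds `1`.
-/

/-- Distance from a real number to the nearest integer. -/
noncomputable def nint (t : ℝ) : ℝ := |t - round t|

open Finset Real Filter Topology

theorem mul_rpow_sub_one_le_add_one_rpow_sub_rpow {p x : ℝ} (hp₀ : 0 ≤ p) (hp₁ : p ≤ 1)
    (hx : 0 ≤ x) : p * (x + 1) ^ (p - 1) ≤ (x + 1) ^ p - x ^ p := by
  have hx₁ : 0 < x + 1 := by linarith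
  have bernoulli := rpow_one_add_le_one_add_mul_self (s := -(x + 1)⁻¹)
    (by linarith [inv_le_one_of_one_le₀ (by linarith : 1 ≤ x + 1)]) hp₀ hp₁
  rw [show 1 + -(x + 1)⁻¹ = x / (x + 1) by field_simp; ring, div_rpow hx hx₁.le,
    div_le_iff₀ (rpow_pos_of_pos hx₁ p)] at bernoulli
  rw [rpow_sub_one hx₁.ne']
  calc p * ((x + 1) ^ p / (x + 1)) = (x + 1) ^ p - (1 + p * -(x + 1)⁻¹) * (x + 1) ^ p := by ring
    _ ≤ (x + 1) ^ p - x ^ p := by linarith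

theorem sum_Icc_rpow_sub_one_le {p : ℝ} (hp₀ : 0 < p) (hp₁ : p ≤ 1) (m : ℕ) :
    ∑ j ∈ Icc 1 m, (j : ℝ) ^ (p - 1) ≤ m ^ p / p := by
  induction m with
  | zero => simp [zero_rpow hp₀.ne']
  | succ m ih =>
    have step := mul_rpow_sub_one_le_add_one_rpow_sub_rpow hp₀.le hp₁ m.cast_nonneg
    rw [sum_Icc_succ_top (by omega), Nat.cast_succ]
    calc _ ≤ (m : ℝ) ^ p / p + ((m + 1) ^ p - m ^ p) / p := by
          gcongr
          rwa [le_div_iff₀ hp₀, mul_comm]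
      _ = _ := by ring

theorem exists_sum_Icc_rpow_le {β : ℝ} (hβ : -1 < β) :
    ∃ B > 0, ∀ m : ℕ, ∑ j ∈ Icc 1 m, (j : ℝ) ^ β ≤ B * m ^ (β + 1) := by
  rcases le_or_gt 0 β with hβ₀ | hβ₀
  · refine ⟨1, one_pos, fun m => ?_⟩
    calc ∑ j ∈ Icc 1 m, (j : ℝ) ^ β ≤ ∑ _j ∈ Icc 1 m, (m : ℝ) ^ β := by
          gcongr with j hj
          exact_mod_cast (mem_Icc.mp hj).2
      _ = 1 * m ^ (β + 1) := by
          rw [sum_const, Nat.card_Icc, Nat.add_sub_cancel, nsmul_eq_mul,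
            rpow_add_one' m.cast_nonneg (by linarith)]
          ring
  · refine ⟨1 / (β + 1), by simp; linarith, fun m => ?_⟩
    have := sum_Icc_rpow_sub_one_le (p := β + 1) (by linarith) (by linarith) m
    rw [add_sub_cancel_right] at this
    rwa [one_div_mul_eq_div]

theorem sum_Icc_div_eq (a : ℕ → ℝ) (m : ℕ) :
    ∑ h ∈ Icc 1 m, a h / h =
      (∑ h ∈ Icc 1 m, a h) / m + ∑ j ∈ Ico 1 m, (∑ h ∈ Icc 1 j, a h) / (j * (j + 1)) := by
  induction m with
  | zero => simp
  | succ m ih =>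
    rw [sum_Icc_succ_top (by omega), ih, sum_Icc_succ_top (by omega)]
    rcases Nat.eq_zero_or_pos m with rfl | hm
    · simp
    rw [sum_Ico_succ_top hm]
    have : (m : ℝ) ≠ 0 := by positivity
    push_cast
    field_simp
    ring

theorem exists_sum_Icc_div_le_of_sum_Icc_le {a : ℕ → ℝ} {A σ : ℝ} (hA : 0 < A) (hσ : 1 < σ)
    (ha : ∀ n : ℕ, 1 ≤ n → ∑ h ∈ Icc 1 n, a h ≤ A * n ^ σ) :
    ∃ C > 0, ∀ m : ℕ, 1 ≤ m → ∑ h ∈ Icc 1 m, a h / h ≤ C * m ^ (σ - 1) := by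
  obtain ⟨B, hB, hpow⟩ := exists_sum_Icc_rpow_le (β := σ - 2) (by linarith)
  rw [show σ - 2 + 1 = σ - 1 by ring] at hpow
  refine ⟨A * (1 + B), by positivity, fun m hm => ?_⟩
  have hm₀ : (0 : ℝ) < m := by exact_mod_cast hm
  have weighted : ∀ j ∈ Ico 1 m, (∑ h ∈ Icc 1 j, a h) / (j * (j + 1)) ≤ A * (j : ℝ) ^ (σ - 2) := by
    intro j hj
    have hj₀ : (0 : ℝ) < j := by exact_mod_cast (mem_Ico.mp hj).1
    calc (∑ h ∈ Icc 1 j, a h) / (j * (j + 1)) ≤ A * j ^ σ / (j * (j + 1)) := by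
          gcongr
          exact ha j (mem_Ico.mp hj).1
      _ ≤ A * j ^ σ / j ^ (2 : ℝ) := by
          gcongr
          rw [rpow_two]
          nlinarith
      _ = A * j ^ (σ - 2) := by rw [rpow_sub hj₀, mul_div_assoc]
  rw [sum_Icc_div_eq]
  calc (∑ h ∈ Icc 1 m, a h) / m + ∑ j ∈ Ico 1 m, (∑ h ∈ Icc 1 j, a h) / (j * (j + 1))
      ≤ A * m ^ σ / m + ∑ j ∈ Icc 1 m, A * (j : ℝ) ^ (σ - 2) := by
        gcongr
        · exact ha m hm
        · refine (sum_le_sum weighted).trans (sum_le_sum_of_subset_of_nonneg Ico_subset_Icc_self ?_)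
          intros; positivity
    _ ≤ A * m ^ (σ - 1) + A * (B * m ^ (σ - 1)) := by
        rw [← mul_sum, mul_div_assoc, ← rpow_sub_one hm₀.ne']
        gcongr
        exact hpow m
    _ = A * (1 + B) * m ^ (σ - 1) := by ring

def IsFiniteType (α τ : ℝ) : Prop :=
  ∀ ε : ℝ, 0 < ε → ∃ c₀ : ℝ, 0 < c₀ ∧ ∀ q : ℕ, 0 < q → c₀ / (q : ℝ) ^ (τ + ε) ≤ nint (q * α)

theorem one_le_of_div_rpow_le_nint {α σ c₀ : ℝ} (hc₀ : 0 < c₀)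
    (h : ∀ q : ℕ, 0 < q → c₀ / (q : ℝ) ^ σ ≤ nint (q * α)) : 1 ≤ σ := by
  by_contra! hσ
  set s := max σ 0
  have hs : s < 1 := max_lt hσ one_pos
  have decay : Tendsto (fun N : ℕ => (N : ℝ) ^ (s - 1)) atTop (𝓝 0) := by
    have := (tendsto_rpow_neg_atTop (by linarith : 0 < 1 - s)).comp tendsto_natCast_atTop_atTop
    rwa [neg_sub] at this
  obtain ⟨N, hN, hN₀⟩ := ((decay.eventually (gt_mem_nhds hc₀)).and (eventually_gt_atTop 0)).exists
  obtain ⟨q, hq₀, hqN, hq⟩ := Real.exists_nat_abs_mul_sub_round_le α hN₀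
  have hq₁ : (1 : ℝ) ≤ q := by exact_mod_cast hq₀
  have hN : (0 : ℝ) < N := by exact_mod_cast hN₀
  have hqs : (q : ℝ) ^ σ ≤ N ^ s :=
    (rpow_le_rpow_of_exponent_le hq₁ (le_max_left σ 0)).trans
      (rpow_le_rpow (by positivity) (by exact_mod_cast hqN) (le_max_right σ 0))
  have : c₀ / N ^ s < 1 / N := by
    calc c₀ / N ^ s ≤ c₀ / (q : ℝ) ^ σ := by gcongr
      _ ≤ 1 / (N + 1) := (h q hq₀).trans hq
      _ < 1 / N := by gcongr; linarith
  rw [div_lt_div_iff₀ (by positivity) hN, one_mul, ← lt_div_iff₀ hN, ← rpow_sub_one hN.ne'] at this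
  linarith

theorem IsFiniteType.one_le {α τ : ℝ} (h : IsFiniteType α τ) : 1 ≤ τ :=
  le_of_forall_pos_le_add fun ε hε =>
    let ⟨_, hc₀, hα⟩ := h ε hε
    one_le_of_div_rpow_le_nint hc₀ hα

theorem sum_one_div_abs_le_of_separated {ι : Type*} (s : Finset ι) (r : ι → ℝ)
    {δ M : ℝ} (hδ : 0 < δ) (hr : ∀ i ∈ s, δ ≤ |r i| ∧ |r i| ≤ M)
    (hsep : ∀ i ∈ s, ∀ j ∈ s, i ≠ j → δ ≤ |r i - r j|) :
    ∑ i ∈ s, 1 / |r i| ≤ 2 / δ * ∑ b ∈ Icc 1 ⌊M / δ⌋₊, (b : ℝ)⁻¹ := by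
  set k : ι → ℕ := fun i => ⌊|r i| / δ⌋₊
  have band : ∀ i ∈ s, k i ∈ Icc 1 ⌊M / δ⌋₊ ∧ k i * δ ≤ |r i| ∧ |r i| < (k i + 1) * δ := by
    intro i hi
    have hr₀ : 0 ≤ |r i| / δ := by positivity
    refine ⟨mem_Icc.mpr ⟨Nat.le_floor ?_, Nat.floor_le_floor (by gcongr; exact (hr i hi).2)⟩,
      (le_div_iff₀ hδ).mp (Nat.floor_le hr₀), (div_lt_iff₀ hδ).mp (Nat.lt_floor_add_one _)⟩
    rw [Nat.cast_one, le_div_iff₀ hδ, one_mul]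
    exact (hr i hi).1
  -- Two residues of the same sign in the same band `[bδ, (b+1)δ)` would be closer than `δ`.
  have hinj : Set.InjOn (fun i => (k i, decide (0 ≤ r i))) s := by
    intro i hi j hj hij
    simp only [Prod.mk.injEq, decide_eq_decide] at hij
    by_contra hne
    have hi' := band i hi
    have hj' := band j hj
    rw [hij.1] at hi'
    have : |r i - r j| < δ := by
      rcases le_or_gt 0 (r i) with h | h
      · have h' := hij.2.mp h
        rw [abs_of_nonneg h, abs_of_nonneg h'] at *
        rw [abs_lt]; constructor <;> linarith
      · have h' : r j < 0 := by by_contra! h'; exact h.not_ge (hij.2.mpr h')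
        rw [abs_of_neg h, abs_of_neg h'] at *
        rw [abs_lt]; constructor <;> linarith
    exact (hsep i hi j hj hne).not_gt this
  set g : ℕ × Bool → ℝ := fun p => 1 / (p.1 * δ)
  calc ∑ i ∈ s, 1 / |r i| ≤ ∑ i ∈ s, g (k i, decide (0 ≤ r i)) := by
        refine sum_le_sum fun i hi => one_div_le_one_div_of_le ?_ (band i hi).2.1
        have := (mem_Icc.mp (band i hi).1).1
        positivity
    _ = ∑ p ∈ s.image (fun i => (k i, decide (0 ≤ r i))), g p := (sum_image hinj).symm
    _ ≤ ∑ p ∈ Icc 1 ⌊M / δ⌋₊ ×ˢ univ, g p := by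
        refine sum_le_sum_of_subset_of_nonneg ?_ fun p _ _ => by positivity
        intro p hp
        obtain ⟨i, hi, rfl⟩ := mem_image.mp hp
        exact mem_product.mpr ⟨(band i hi).1, mem_univ _⟩
    _ = 2 / δ * ∑ b ∈ Icc 1 ⌊M / δ⌋₊, (b : ℝ)⁻¹ := by
        rw [sum_product, mul_sum]
        refine sum_congr rfl fun b _ => ?_
        simp only [g, sum_const, card_univ, Fintype.card_bool, nsmul_eq_mul, one_div, mul_inv]
        ring

theorem nint_sub_le (x y : ℝ) : nint (x - y) ≤ |(x - round x) - (y - round y)| :=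
  (round_le (x - y) (round x - round y)).trans_eq (by push_cast; ring_nf)

theorem sum_one_div_nint_le {α δ : ℝ} {N : ℕ} (hδ : 0 < δ)
    (hα : ∀ q : ℕ, 0 < q → q ≤ N → δ ≤ nint (q * α)) :
    ∑ h ∈ Icc 1 N, 1 / nint (h * α) ≤ 2 / δ * ∑ b ∈ Icc 1 ⌊1 / 2 / δ⌋₊, (b : ℝ)⁻¹ := by
  refine sum_one_div_abs_le_of_separated _ (fun h : ℕ => h * α - round (h * α)) hδ
    (fun h hh => ⟨hα h (mem_Icc.mp hh).1 (mem_Icc.mp hh).2, abs_sub_round _⟩) ?_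
  have ordered : ∀ u ∈ Icc 1 N, ∀ v ∈ Icc 1 N, v < u →
      δ ≤ |(u * α - round (u * α)) - (v * α - round (v * α))| := by
    intro u hu v hv hvu
    refine le_trans ?_ (nint_sub_le _ _)
    have := hα (u - v) (by omega) (by have := (mem_Icc.mp hu).2; omega)
    rwa [Nat.cast_sub hvu.le, sub_mul] at this
  intro u hu v hv huv
  rcases lt_or_gt_of_ne huv with h | h
  · rw [abs_sub_comm]; exact ordered v hv u hu h
  · exact ordered u hu v hv h

theorem IsFiniteType.exists_sum_one_div_nint_le {α τ : ℝ} (hα : IsFiniteType α τ) {ε : ℝ}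
    (hε : 0 < ε) : ∃ A > 0, ∀ N : ℕ, 1 ≤ N → ∑ h ∈ Icc 1 N, 1 / nint (h * α) ≤ A * N ^ (τ + ε) := by
  set β := τ + ε / 2 with hβdef
  have hβ : 0 < β := by linarith [hα.one_le]
  obtain ⟨c₀, hc₀, hc₀α⟩ := hα (ε / 2) (by positivity)
  set e := ε / 2 / β
  have he : 0 < e := by positivity
  obtain ⟨B, hB, hpow⟩ := exists_sum_Icc_rpow_le (β := e - 1) (by linarith)
  have harmonic_le : ∀ K : ℕ, ∑ b ∈ Icc 1 K, (b : ℝ)⁻¹ ≤ B * K ^ e := fun K => by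
    calc ∑ b ∈ Icc 1 K, (b : ℝ)⁻¹ ≤ ∑ b ∈ Icc 1 K, (b : ℝ) ^ (e - 1) := by
          refine sum_le_sum fun b hb => ?_
          rw [← rpow_neg_one]
          exact rpow_le_rpow_of_exponent_le (by exact_mod_cast (mem_Icc.mp hb).1) (by linarith)
      _ ≤ B * K ^ e := by simpa using hpow K
  refine ⟨2 * B / (c₀ * (2 * c₀) ^ e), by positivity, fun N hN => ?_⟩
  have hN₀ : (0 : ℝ) < N := by exact_mod_cast hN
  set δ := c₀ / N ^ β with hδdef
  have hδ : 0 < δ := by positivity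
  have hδα : ∀ q : ℕ, 0 < q → q ≤ N → δ ≤ nint (q * α) := fun q hq hqN =>
    calc δ ≤ c₀ / (q : ℝ) ^ β := by rw [hδdef]; gcongr
      _ ≤ nint (q * α) := hc₀α q hq
  have hexp : β + β * e = τ + ε := by rw [mul_div_cancel₀ _ hβ.ne', hβdef]; ring
  calc ∑ h ∈ Icc 1 N, 1 / nint (h * α)
      ≤ 2 / δ * ∑ b ∈ Icc 1 ⌊1 / 2 / δ⌋₊, (b : ℝ)⁻¹ := sum_one_div_nint_le hδ hδα
    _ ≤ 2 / δ * (B * (1 / 2 / δ) ^ e) := by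
        gcongr
        exact (harmonic_le _).trans (by gcongr; exact Nat.floor_le (by positivity))
    _ = 2 * B / (c₀ * (2 * c₀) ^ e) * N ^ (τ + ε) := by
        rw [← hexp, rpow_add hN₀, rpow_mul hN₀.le, show 1 / 2 / δ = N ^ β / (2 * c₀) by
          rw [hδdef]; field_simp, div_rpow (by positivity) (by positivity), hδdef]
        field_simp

theorem stmt_11_general (α : ℝ) (τ : ℝ)
    (htype : ∀ ε : ℝ, 0 < ε → ∃ c₀ : ℝ, 0 < c₀ ∧ ∀ q : ℕ, 0 < q →
      c₀ / (q : ℝ) ^ (τ + ε) ≤ nint (q * α)) :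
    ∀ ε : ℝ, 0 < ε → ∃ c : ℝ, 0 < c ∧ ∀ m : ℕ, 1 ≤ m →
      ∑ h ∈ Finset.Icc 1 m, 1 / ((h : ℝ) * nint (h * α)) ≤
        c * (m : ℝ) ^ (τ - 1 + ε) := by
  intro ε hε
  have hα : IsFiniteType α τ := htype
  obtain ⟨A, hA, hsum⟩ := hα.exists_sum_one_div_nint_le hε
  obtain ⟨C, hC, hweighted⟩ := exists_sum_Icc_div_le_of_sum_Icc_le hA (by linarith [hα.one_le]) hsum
  refine ⟨C, hC, fun m hm => ?_⟩
  calc ∑ h ∈ Icc 1 m, 1 / ((h : ℝ) * nint (h * α))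
      = ∑ h ∈ Icc 1 m, 1 / nint (h * α) / h := sum_congr rfl fun h _ => by rw [div_div, mul_comm]
    _ ≤ C * m ^ (τ + ε - 1) := hweighted m hm
    _ = C * m ^ (τ - 1 + ε) := by ring_nf

/-- If α is an irrational of finite type τ, then for every ε > 0 there is c > 0
with Σ_{h=1}^m 1/(h‖hα‖) ≤ c m^{τ−1+ε} for all m ≥ 1. -/
theorem stmt_11 (α : ℝ) (hα : Irrational α) (τ : ℝ)
    (htype : ∀ ε : ℝ, 0 < ε → ∃ c₀ : ℝ, 0 < c₀ ∧ ∀ q : ℕ, 0 < q →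
      c₀ / (q : ℝ) ^ (τ + ε) ≤ nint (q * α)) :
    ∀ ε : ℝ, 0 < ε → ∃ c : ℝ, 0 < c ∧ ∀ m : ℕ, 1 ≤ m →
      ∑ h ∈ Finset.Icc 1 m, 1 / ((h : ℝ) * nint (h * α)) ≤
        c * (m : ℝ) ^ (τ - 1 + ε) :=
  stmt_11_general α τ htype
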